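/- Let 1 ≤ p < n and assume δ_p := λ_p − λ_{p+1} > 0. Then F₁ ≤ 2‖E‖/δ_p. -/

import Mathlib

open Matrix

/-- The spectral norm (ℓ²→ℓ² operator norm) of a matrix. -/
noncomputable def specNorm {𝕜 : Type*} [RCLike 𝕜] {m n : ℕ}
    (M : Matrix (Fin m) (Fin n) 𝕜) : ℝ :=
  ‖LinearMap.toContinuousLinearMap (Matrix.toEuclideanLin M)‖

/-- The resolvent `(zI − A)⁻¹` of a real matrix `A`, regarded as a complex matrix. -/
noncomputable def res {n : ℕ} (A : Matrix (Fin n) (Fin n) ℝ) (z : ℂ) :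
    Matrix (Fin n) (Fin n) ℂ :=
  (z • (1 : Matrix (Fin n) (Fin n) ℂ) - A.map Complex.ofReal)⁻¹

/-!
Each integrand is at most `‖E‖ ‖(zI - A)⁻¹‖²`, and because `A` has an orthonormal eigenbasis,
`‖(zI - A)⁻¹‖ ≤ 1 / dist(z, spec A)`. On a vertical side `Re z = x` with `|x - λ_i| ≥ a` for all
`i`, this gives the integrand `‖E‖ / (a² + t²)`, which integrates to `(2/a) arctan (T/a)`; the line
`Re z = x₀` bisects the gap, so `a = δ_p/2` there and `a = σ₁` on `Re z = x₁`. On the horizontal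
sides the distance is at least `T = 2σ₁`. Summing, the vertical sides give at most
`2π/δ_p + π/σ₁` minus a margin that pays for the horizontal sides, and `π/σ₁ ≤ 2π/δ_p` since
`δ_p ≤ 2σ₁`.
-/

open Real Finset MeasureTheory
open Complex (I ofReal)
open scoped Matrix.Norms.L2Operator

theorem specNorm_eq_l2_opNorm {𝕜 : Type*} [RCLike 𝕜] {m n : ℕ} (M : Matrix (Fin m) (Fin n) 𝕜) :
    specNorm M = ‖M‖ := rfl

section L2OpNorm

variable {𝕜 ι : Type*} [RCLike 𝕜] [Fintype ι] [DecidableEq ι]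

theorem Matrix.l2_opNorm_inv_le {B : Matrix ι ι 𝕜} {d : ℝ} (hd : 0 < d)
    (h : ∀ w : EuclideanSpace 𝕜 ι, d * ‖w‖ ≤ ‖toEuclideanLin B w‖) : ‖B⁻¹‖ ≤ d⁻¹ := by
  have hB : IsUnit B := by
    refine mulVec_injective_iff_isUnit.mp fun v w hvw => ?_
    have hle := h (WithLp.toLp 2 (v - w))
    simp only [toLpLin_toLp, toLin'_apply, mulVec_sub, hvw, sub_self, WithLp.toLp_zero,
      norm_zero] at hle
    simpa [sub_eq_zero] using nonpos_of_mul_nonpos_right hle hd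
  refine ContinuousLinearMap.opNorm_le_bound _ (by positivity) fun x => ?_
  have hx : toEuclideanLin B (toEuclideanLin B⁻¹ x) = x := by
    simp [toLpLin_apply, mulVec_mulVec, mul_nonsing_inv B ((isUnit_iff_isUnit_det B).mp hB)]
  have := h (toEuclideanLin B⁻¹ x)
  rw [hx] at this
  exact (le_inv_mul_iff₀ hd).mpr this

theorem Matrix.norm_le_l2_opNorm_of_mulVec_eq_smul {A : Matrix ι ι 𝕜} {v : ι → 𝕜} {μ : 𝕜}
    (hv : v ≠ 0) (h : A *ᵥ v = μ • v) : ‖μ‖ ≤ ‖A‖ := by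
  have hle := l2_opNorm_mulVec A (WithLp.toLp 2 v)
  have hv' : 0 < ‖WithLp.toLp 2 v‖ := by simpa using hv
  rw [EuclideanSpace.equiv, h] at hle
  exact le_of_mul_le_mul_right (by simpa [norm_smul] using hle) hv'

end L2OpNorm

theorem Orthonormal.mul_norm_le_norm_of_apply_eq_smul {𝕜 E ι : Type*} [RCLike 𝕜]
    [NormedAddCommGroup E] [InnerProductSpace 𝕜 E] [FiniteDimensional 𝕜 E] [Fintype ι]
    {v : ι → E} (hv : Orthonormal 𝕜 v) (hcard : Fintype.card ι = Module.finrank 𝕜 E)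
    {f : E →ₗ[𝕜] E} {μ : ι → 𝕜} (hf : ∀ i, f (v i) = μ i • v i) {d : ℝ} (hd : 0 ≤ d)
    (hμ : ∀ i, d ≤ ‖μ i‖) (w : E) : d * ‖w‖ ≤ ‖f w‖ := by
  let b := OrthonormalBasis.mk hv (hv.linearIndependent.span_eq_top_of_card_eq_finrank' hcard).ge
  have hb : ⇑b = v := OrthonormalBasis.coe_mk _ _
  set c := b.repr w
  have hw : w = ∑ i, c i • v i := by
    rw [← hb, b.sum_repr_symm, LinearIsometryEquiv.symm_apply_apply]
  have hfw : f w = b.repr.symm (WithLp.toLp 2 fun i => μ i * c i) := by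
    rw [← b.sum_repr_symm, hw, map_sum, hb]
    simp [hf, smul_smul, mul_comm]
  rw [hfw, LinearIsometryEquiv.norm_map, ← b.repr.norm_map w]
  refine le_of_sq_le_sq ?_ (norm_nonneg _)
  simp only [mul_pow, EuclideanSpace.norm_sq_eq, Finset.mul_sum, norm_mul]
  refine Finset.sum_le_sum fun i _ => ?_
  gcongr
  exact hμ i

theorem norm_sq_toLp_ofReal_add_mul_I {ι : Type*} [Fintype ι] (a b : ι → ℝ) :
    ‖WithLp.toLp 2 (fun k => (a k : ℂ) + b k * I)‖ ^ 2 =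
      ‖WithLp.toLp 2 a‖ ^ 2 + ‖WithLp.toLp 2 b‖ ^ 2 := by
  simp only [EuclideanSpace.norm_sq_eq, ← Finset.sum_add_distrib, Complex.sq_norm,
    Complex.normSq_apply]
  simp [sq]

theorem Matrix.l2_opNorm_map_ofReal_le {ι : Type*} [Fintype ι] [DecidableEq ι] (E : Matrix ι ι ℝ) :
    ‖E.map ofReal‖ ≤ ‖E‖ := by
  refine ContinuousLinearMap.opNorm_le_bound _ (norm_nonneg _) fun x => ?_
  set a : ι → ℝ := fun k => (x k).re
  set b : ι → ℝ := fun k => (x k).im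
  have hx : x = WithLp.toLp 2 (fun k => (a k : ℂ) + b k * I) := by
    ext k; simp [a, b, Complex.re_add_im]
  have hEx : E.map ofReal *ᵥ x.ofLp = fun k => ((E *ᵥ a) k : ℂ) + (E *ᵥ b) k * I := by
    ext k
    simp [hx, mulVec, dotProduct, mul_add, Finset.sum_add_distrib, Finset.sum_mul, mul_assoc]
  have hEa : ‖WithLp.toLp 2 (E *ᵥ a)‖ ≤ ‖E‖ * ‖WithLp.toLp 2 a‖ := by
    simpa using l2_opNorm_mulVec E (WithLp.toLp 2 _)
  have hEb : ‖WithLp.toLp 2 (E *ᵥ b)‖ ≤ ‖E‖ * ‖WithLp.toLp 2 b‖ := by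
    simpa using l2_opNorm_mulVec E (WithLp.toLp 2 _)
  change ‖WithLp.toLp 2 (E.map ofReal *ᵥ x.ofLp)‖ ≤ ‖E‖ * ‖x‖
  refine le_of_sq_le_sq ?_ (by positivity)
  rw [hEx, mul_pow, hx, norm_sq_toLp_ofReal_add_mul_I, norm_sq_toLp_ofReal_add_mul_I]
  have h1 := pow_le_pow_left₀ (norm_nonneg _) hEa 2
  have h2 := pow_le_pow_left₀ (norm_nonneg _) hEb 2
  rw [mul_pow] at h1 h2
  rw [mul_add]
  exact add_le_add h1 h2

theorem intervalIntegral.integral_mono_on_of_nonneg {f g : ℝ → ℝ} {a b : ℝ} (hab : a ≤ b)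
    (hf : ∀ t, 0 ≤ f t) (hg : IntervalIntegrable g volume a b)
    (hfg : ∀ t ∈ Set.Icc a b, f t ≤ g t) : ∫ t in a..b, f t ≤ ∫ t in a..b, g t := by
  rw [intervalIntegral.integral_of_le hab, intervalIntegral.integral_of_le hab]
  refine integral_mono_of_nonneg (.of_forall hf) hg.1 ?_
  exact (ae_restrict_iff' measurableSet_Ioc).mpr
    (.of_forall fun t ht => hfg t (Set.Ioc_subset_Icc_self ht))

theorem div_one_add_sq_le_arctan {s : ℝ} (hs : 0 ≤ s) : s / (1 + s ^ 2) ≤ arctan s :=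
  calc s / (1 + s ^ 2) ≤ s / √(1 + s ^ 2) := by
        gcongr
        exact sqrt_le_self_iff.mpr (.inr (by nlinarith))
    _ = sin (arctan s) := (sin_arctan s).symm
    _ ≤ arctan s := sin_le (arctan_nonneg.mpr hs)

theorem arctan_inv_le {s : ℝ} (hs : 0 < s) : arctan s⁻¹ ≤ π / 2 - s / (1 + s ^ 2) := by
  rw [arctan_inv_of_pos hs]
  linarith [div_one_add_sq_le_arctan hs.le]

/-- `arctan x ≥ x / (1 + x²)` at `x = δ / (4σ) ≤ 1/2` and at `x = 1/2` saves `4 / (5σ)` on each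
vertical side, together more than the `3 / (2σ)` that the horizontal sides cost. -/
theorem contour_estimate {δ σ T L : ℝ} (hδ : 0 < δ) (hδσ : δ ≤ 2 * σ) (hT : T = 2 * σ)
    (hL : L ≤ 3 * σ) :
    2 / (δ / 2) * arctan (T / (δ / 2)) + 2 / σ * arctan (T / σ) + 2 * (L / T ^ 2) ≤ 4 * π / δ := by
  have hσ : 0 < σ := by linarith
  have h1 : arctan (T / (δ / 2)) ≤ π / 2 - δ / (5 * σ) := by
    set s := δ / (4 * σ) with hs
    have hs0 : 0 < s := by positivity
    have hs1 : s ≤ 1 / 2 := by rw [hs, div_le_iff₀ (by positivity)]; linarith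
    have hlow : 4 * s / 5 ≤ s / (1 + s ^ 2) := by
      rw [div_le_div_iff₀ (by norm_num) (by positivity)]; nlinarith
    have h5 : 4 * s / 5 = δ / (5 * σ) := by rw [hs]; field_simp
    have h := arctan_inv_le hs0
    rw [hs, inv_div, show 4 * σ / δ = T / (δ / 2) by rw [hT]; field_simp; ring] at h
    linarith
  have h2 : arctan (T / σ) ≤ π / 2 - 2 / 5 := by
    have h := arctan_inv_le (show (0 : ℝ) < 1 / 2 by norm_num)
    rw [show (1 / 2 : ℝ)⁻¹ = T / σ by rw [hT]; field_simp] at h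
    norm_num at h
    linarith
  have h3 : π / σ ≤ 2 * π / δ := by
    rw [div_le_div_iff₀ hσ hδ]; nlinarith [pi_pos]
  calc 2 / (δ / 2) * arctan (T / (δ / 2)) + 2 / σ * arctan (T / σ) + 2 * (L / T ^ 2)
      ≤ 2 / (δ / 2) * (π / 2 - δ / (5 * σ)) + 2 / σ * (π / 2 - 2 / 5) + 2 * (3 * σ / T ^ 2) := by
        gcongr
    _ = 2 * π / δ + π / σ - 1 / (10 * σ) := by rw [hT]; field_simp; ring
    _ ≤ 4 * π / δ := by
        have : 0 < 1 / (10 * σ) := by positivity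
        have : 4 * π / δ = 2 * π / δ + 2 * π / δ := by ring
        linarith

theorem sqrt_sq_add_sq_le_norm {x t μ a : ℝ} (ha : 0 ≤ a) (h : a ≤ |x - μ|) :
    √(a ^ 2 + t ^ 2) ≤ ‖(x + t * I - μ : ℂ)‖ := by
  rw [Complex.norm_def, Complex.normSq_apply]
  refine sqrt_le_sqrt ?_
  simp only [Complex.sub_re, Complex.add_re, Complex.ofReal_re, Complex.mul_re, Complex.I_re,
    Complex.I_im, Complex.ofReal_im, Complex.sub_im, Complex.add_im, Complex.mul_im]
  nlinarith [sq_abs (x - μ), abs_nonneg (x - μ)]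

theorem Fin.val_add_one_mem_Icc {n : ℕ} (i : Fin n) : (i : ℕ) + 1 ∈ Icc 1 n := by
  simp only [mem_Icc]; omega

structure IsOrthonormalEigenbasis {n : ℕ} (A : Matrix (Fin n) (Fin n) ℝ) (lam : ℕ → ℝ)
    (u : ℕ → Fin n → ℝ) : Prop where
  dotProduct_eq : ∀ i ∈ Finset.Icc 1 n, ∀ j ∈ Finset.Icc 1 n, u i ⬝ᵥ u j = if i = j then 1 else 0
  mulVec_eq : ∀ i ∈ Finset.Icc 1 n, A *ᵥ u i = lam i • u i

namespace IsOrthonormalEigenbasis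

variable {n : ℕ} {A : Matrix (Fin n) (Fin n) ℝ} {lam : ℕ → ℝ} {u : ℕ → Fin n → ℝ}

/-- The vectors `u 1, …, u n`, shifted to be indexed by `Fin n` and viewed in `ℂⁿ`. -/
noncomputable def complexifiedFamily (u : ℕ → Fin n → ℝ) (i : Fin n) : EuclideanSpace ℂ (Fin n) :=
  WithLp.toLp 2 fun k => (u (i + 1) k : ℂ)

theorem orthonormal_complexifiedFamily (h : IsOrthonormalEigenbasis A lam u) :
    Orthonormal ℂ (complexifiedFamily u) := by
  rw [orthonormal_iff_ite]
  intro i j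
  have h := h.dotProduct_eq _ (Fin.val_add_one_mem_Icc i) _ (Fin.val_add_one_mem_Icc j)
  simp only [dotProduct, add_left_inj] at h
  simp only [complexifiedFamily, PiLp.inner_apply, RCLike.inner_apply, Complex.conj_ofReal,
    Fin.ext_iff]
  simp_rw [mul_comm (u (j + 1) _ : ℂ)]
  norm_cast
  rw [h]
  split_ifs <;> simp

theorem toEuclideanLin_smul_one_sub_complexifiedFamily (h : IsOrthonormalEigenbasis A lam u)
    (z : ℂ) (i : Fin n) :
    toEuclideanLin (z • (1 : Matrix (Fin n) (Fin n) ℂ) - A.map ofReal) (complexifiedFamily u i) =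
      (z - lam (i + 1)) • complexifiedFamily u i := by
  have h := congrArg (fun v => fun k => ((v k : ℝ) : ℂ)) (h.mulVec_eq _ (Fin.val_add_one_mem_Icc i))
  simp only [mulVec, dotProduct, Pi.smul_apply, smul_eq_mul, Complex.ofReal_mul,
    Complex.ofReal_sum] at h
  ext k
  have hk := congrFun h k
  simp [complexifiedFamily, toLpLin_apply, mulVec, dotProduct, sub_mul, hk]

theorem abs_le_specNorm (h : IsOrthonormalEigenbasis A lam u) {i : ℕ} (hi : i ∈ Icc 1 n) :
    |lam i| ≤ specNorm A := by
  have hu : u i ≠ 0 := fun hu => by simpa [hu] using h.dotProduct_eq i hi i hi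
  exact norm_le_l2_opNorm_of_mulVec_eq_smul hu (h.mulVec_eq i hi)

theorem norm_res_le (h : IsOrthonormalEigenbasis A lam u) {z : ℂ} {d : ℝ} (hd : 0 < d)
    (hz : ∀ i ∈ Icc 1 n, d ≤ ‖z - lam i‖) : ‖res A z‖ ≤ d⁻¹ :=
  l2_opNorm_inv_le hd <| h.orthonormal_complexifiedFamily.mul_norm_le_norm_of_apply_eq_smul
    (by simp) (h.toEuclideanLin_smul_one_sub_complexifiedFamily z) hd.le
    fun i => hz _ (Fin.val_add_one_mem_Icc i)

theorem specNorm_res_mul_mul_res_le (h : IsOrthonormalEigenbasis A lam u)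
    (E : Matrix (Fin n) (Fin n) ℝ) {z : ℂ} {d : ℝ} (hd : 0 < d)
    (hz : ∀ i ∈ Icc 1 n, d ≤ ‖z - lam i‖) :
    specNorm (res A z * E.map ofReal * res A z) ≤ specNorm E / d ^ 2 := by
  have hR := h.norm_res_le hd hz
  calc ‖res A z * E.map ofReal * res A z‖
      ≤ ‖res A z‖ * ‖E.map ofReal‖ * ‖res A z‖ := by grw [l2_opNorm_mul, l2_opNorm_mul]
    _ ≤ d⁻¹ * ‖E‖ * d⁻¹ := by gcongr; exact l2_opNorm_map_ofReal_le E
    _ = specNorm E / d ^ 2 := by rw [specNorm_eq_l2_opNorm]; field_simp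

theorem integral_vertical_le (h : IsOrthonormalEigenbasis A lam u) (E : Matrix (Fin n) (Fin n) ℝ)
    {x a T : ℝ} (ha : 0 < a) (hT : 0 ≤ T) (hx : ∀ i ∈ Icc 1 n, a ≤ |x - lam i|) :
    ∫ t in (-T)..T, specNorm (res A (x + t * I) * E.map ofReal * res A (x + t * I)) ≤
      specNorm E * (2 / a * arctan (T / a)) := by
  have hq : ∀ t : ℝ, 0 < a ^ 2 + t ^ 2 := fun t => by positivity
  have hpt : ∀ t : ℝ, specNorm (res A (x + t * I) * E.map ofReal * res A (x + t * I)) ≤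
      specNorm E * (a ^ 2 + t ^ 2)⁻¹ := fun t => by
    have hbd := h.specNorm_res_mul_mul_res_le E (sqrt_pos.mpr (hq t))
      fun i hi => sqrt_sq_add_sq_le_norm ha.le (hx i hi)
    rwa [sq_sqrt (hq t).le, div_eq_mul_inv] at hbd
  have hcont : Continuous fun t : ℝ => specNorm E * (a ^ 2 + t ^ 2)⁻¹ :=
    continuous_const.mul <| (continuous_const.add (continuous_pow 2)).inv₀ fun t => (hq t).ne'
  calc _ ≤ ∫ t in (-T)..T, specNorm E * (a ^ 2 + t ^ 2)⁻¹ :=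
        intervalIntegral.integral_mono_on_of_nonneg (by linarith) (fun _ => norm_nonneg _)
          (hcont.intervalIntegrable _ _) fun t _ => hpt t
    _ = specNorm E * (2 / a * arctan (T / a)) := by
        rw [intervalIntegral.integral_const_mul, integral_inv_sq_add_sq ha.ne', neg_div, arctan_neg]
        ring

theorem integral_horizontal_le (h : IsOrthonormalEigenbasis A lam u)
    (E : Matrix (Fin n) (Fin n) ℝ) {x₀ x₁ y : ℝ} (hy : y ≠ 0) (hx : x₀ ≤ x₁) :
    ∫ x in x₀..x₁, specNorm (res A (x + y * I) * E.map ofReal * res A (x + y * I)) ≤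
      specNorm E * ((x₁ - x₀) / y ^ 2) := by
  have hpt : ∀ x : ℝ, specNorm (res A (x + y * I) * E.map ofReal * res A (x + y * I)) ≤
      specNorm E / y ^ 2 := fun x => by
    have hbd := h.specNorm_res_mul_mul_res_le E (abs_pos.mpr hy) fun i _ => by
      simpa using Complex.abs_im_le_norm ((x + y * I : ℂ) - lam i)
    rwa [sq_abs] at hbd
  calc _ ≤ ∫ _ in x₀..x₁, specNorm E / y ^ 2 :=
        intervalIntegral.integral_mono_on_of_nonneg hx (fun _ => norm_nonneg _)
          intervalIntegrable_const fun x _ => hpt x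
    _ = specNorm E * ((x₁ - x₀) / y ^ 2) := by
        rw [intervalIntegral.integral_const, smul_eq_mul]
        ring

end IsOrthonormalEigenbasis

theorem half_gap_le_abs_midpoint_sub {n p : ℕ} {lam : ℕ → ℝ}
    (hlam : ∀ i ∈ Icc 1 n, ∀ j ∈ Icc 1 n, i ≤ j → lam j ≤ lam i) (hp1 : 1 ≤ p) (hpn : p < n)
    {i : ℕ} (hi : i ∈ Icc 1 n) :
    (lam p - lam (p + 1)) / 2 ≤ |(lam p + lam (p + 1)) / 2 - lam i| := by
  rcases le_or_gt i p with hip | hip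
  · have := hlam i hi p (by simp only [mem_Icc]; omega) hip
    rw [abs_sub_comm]
    exact le_abs.mpr (.inl (by linarith))
  · have := hlam (p + 1) (by simp only [mem_Icc]; omega) i hi hip
    exact le_abs.mpr (.inl (by linarith))

theorem F1_crude_bound_general
    {n : ℕ} (A E : Matrix (Fin n) (Fin n) ℝ)
    (lam : ℕ → ℝ)
    (hlam_mono : ∀ i ∈ Finset.Icc 1 n, ∀ j ∈ Finset.Icc 1 n, i ≤ j → lam j ≤ lam i)
    (u : ℕ → (Fin n → ℝ))
    (hu_on : ∀ i ∈ Finset.Icc 1 n, ∀ j ∈ Finset.Icc 1 n,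
      u i ⬝ᵥ u j = if i = j then 1 else 0)
    (hu_eig : ∀ i ∈ Finset.Icc 1 n, A *ᵥ u i = lam i • u i)
    (p : ℕ) (hp1 : 1 ≤ p) (hpn : p < n)
    (δp : ℝ) (hδp : δp = lam p - lam (p + 1)) (hδp_pos : 0 < δp)
    (x₀ x₁ T : ℝ) (hx₀ : x₀ = lam p - δp / 2)
    (hx₁ : x₁ = 2 * specNorm A) (hT : T = 2 * specNorm A)
    (M1 M2 M3 M4 F1 : ℝ)
    (hM1 : M1 = ∫ t in (-T)..T, specNorm
      (res A (x₀ + t * Complex.I) * E.map Complex.ofReal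
        * res A (x₀ + t * Complex.I)))
    (hM2 : M2 = ∫ x in x₀..x₁, specNorm
      (res A (x + T * Complex.I) * E.map Complex.ofReal
        * res A (x + T * Complex.I)))
    (hM3 : M3 = ∫ t in (-T)..T, specNorm
      (res A (x₁ + t * Complex.I) * E.map Complex.ofReal
        * res A (x₁ + t * Complex.I)))
    (hM4 : M4 = ∫ x in x₀..x₁, specNorm
      (res A (x - T * Complex.I) * E.map Complex.ofReal
        * res A (x - T * Complex.I)))
    (hF1 : F1 = 1 / (2 * Real.pi) * (M1 + M2 + M3 + M4)) :
    F1 ≤ 2 * specNorm E / δp := by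
  have h : IsOrthonormalEigenbasis A lam u := ⟨hu_on, hu_eig⟩
  set σ := specNorm A
  have hσ : ∀ i ∈ Icc 1 n, -σ ≤ lam i ∧ lam i ≤ σ := fun i hi => abs_le.mp (h.abs_le_specNorm hi)
  have hp := hσ p (by simp only [mem_Icc]; omega)
  have hp' := hσ (p + 1) (by simp only [mem_Icc]; omega)
  have hσ0 : 0 < σ := by linarith
  have hx₀' : x₀ = (lam p + lam (p + 1)) / 2 := by rw [hx₀, hδp]; ring
  have hM1b := hM1 ▸ h.integral_vertical_le E (x := x₀) (T := T) (half_pos hδp_pos) (by linarith)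
    fun i hi => hδp ▸ hx₀' ▸ half_gap_le_abs_midpoint_sub hlam_mono hp1 hpn hi
  have hM3b := hM3 ▸ h.integral_vertical_le E (x := x₁) (T := T) hσ0 (by linarith)
    fun i hi => le_abs.mpr (.inl (by linarith [hσ i hi]))
  have hM2b := hM2 ▸ h.integral_horizontal_le E (y := T) (x₀ := x₀) (x₁ := x₁) (by linarith)
    (by linarith)
  have hM4b := h.integral_horizontal_le E (y := -T) (x₀ := x₀) (x₁ := x₁) (by linarith)
    (by linarith)
  simp only [Complex.ofReal_neg, neg_mul, ← sub_eq_add_neg, neg_sq, ← hM4] at hM4b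
  have key := contour_estimate (L := x₁ - x₀) hδp_pos (by linarith) hT (by linarith)
  have hsum : M1 + M2 + M3 + M4 ≤ specNorm E * (4 * π / δp) := by
    have he : 0 ≤ specNorm E := norm_nonneg _
    linarith [mul_le_mul_of_nonneg_left key he]
  rw [hF1]
  calc _ ≤ 1 / (2 * π) * (specNorm E * (4 * π / δp)) := by gcongr
    _ = 2 * specNorm E / δp := by field_simp; ring

/-- **Crude bound `F₁ ≤ 2‖E‖/δ_p`** (Remark 4.4 of the paper). Indices are
1-based; `x₀ = λ_p − δ_p/2`, `x₁ = T = 2σ₁` with `σ₁ = ‖A‖`. -/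
theorem F1_crude_bound
    {n : ℕ} (A E : Matrix (Fin n) (Fin n) ℝ) (hA : A.IsSymm) (hE : E.IsSymm)
    (lam : ℕ → ℝ)
    (hlam_mono : ∀ i ∈ Finset.Icc 1 n, ∀ j ∈ Finset.Icc 1 n, i ≤ j → lam j ≤ lam i)
    (u : ℕ → (Fin n → ℝ))
    (hu_on : ∀ i ∈ Finset.Icc 1 n, ∀ j ∈ Finset.Icc 1 n,
      u i ⬝ᵥ u j = if i = j then 1 else 0)
    (hu_eig : ∀ i ∈ Finset.Icc 1 n, A *ᵥ u i = lam i • u i)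
    (p : ℕ) (hp1 : 1 ≤ p) (hpn : p < n)
    (δp : ℝ) (hδp : δp = lam p - lam (p + 1)) (hδp_pos : 0 < δp)
    (x₀ x₁ T : ℝ) (hx₀ : x₀ = lam p - δp / 2)
    (hx₁ : x₁ = 2 * specNorm A) (hT : T = 2 * specNorm A)
    (M1 M2 M3 M4 F1 : ℝ)
    (hM1 : M1 = ∫ t in (-T)..T, specNorm
      (res A (x₀ + t * Complex.I) * E.map Complex.ofReal
        * res A (x₀ + t * Complex.I)))
    (hM2 : M2 = ∫ x in x₀..x₁, specNorm
      (res A (x + T * Complex.I) * E.map Complex.ofReal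
        * res A (x + T * Complex.I)))
    (hM3 : M3 = ∫ t in (-T)..T, specNorm
      (res A (x₁ + t * Complex.I) * E.map Complex.ofReal
        * res A (x₁ + t * Complex.I)))
    (hM4 : M4 = ∫ x in x₀..x₁, specNorm
      (res A (x - T * Complex.I) * E.map Complex.ofReal
        * res A (x - T * Complex.I)))
    (hF1 : F1 = 1 / (2 * Real.pi) * (M1 + M2 + M3 + M4)) :
    F1 ≤ 2 * specNorm E / δp :=
  F1_crude_bound_general A E lam hlam_mono u hu_on hu_eig p hp1 hpn δp hδp hδp_pos x₀ x₁ T hx₀ hx₁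
    hT M1 M2 M3 M4 F1 hM1 hM2 hM3 hM4 hF1
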